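/- Let T be a finite Δ-group based at a finite group G, over a field k of characteristic not dividing any |T(g,h)|. Let A = ⊕_{g,h ∈ G} ⊕_{x ∈ T(g,h)} k·x, extend m and P linearly, and define u : k → A ⊗ A by u(1) = Σ_{g,h ∈ G} (1/|T(g,h)|) Σ_{x ∈ T(g,h)} x ⊗ Q(x). Then u satisfies the symmetry condition u(1) = Σ P^2(u_2) ⊗ P(u_1), and P^3 = id_A and P(m(a⊗b⊗c)) = m(P(b)⊗P(c)⊗P(a)) hold on A. -/

import Mathlib

open scoped TensorProduct

/-- Transport an element of `T a c` along equalities of the indices. -/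
def castT {G : Type} (T : G → G → Type) {a b c d : G} (h1 : a = b) (h2 : c = d)
    (x : T a c) : T b d := h1 ▸ h2 ▸ x

/-- A Δ-group based at a group `G`: a collection of sets `T(g,h)`, `g,h ∈ G`, with
operations `m : T(g,h⁻¹) × T(h,k⁻¹) × T(h⁻¹g,k⁻¹h) → T(g,k⁻¹)`,
`P : T(g,h) → T(h,g⁻¹h⁻¹)`, `Q : T(g,h) → T(g⁻¹,hg)` satisfying `P³ = id`, `Q² = id`,
`P²Q = QP`, `P(m(a,b,c)) = m(P(b),P(c),P(a))`, `Q(m(a,b,c)) = m(Q(a),Q(c),Q(b))`,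
`m(m(a,b,c),d,e) = m(a,m(b,d,f),m(c,Q(f),e))` and `m(m(f,a,b),P²Q(a),PQ(b)) = f`. -/
structure DeltaGroup (G : Type) [Group G] where
  T : G → G → Type
  m : ∀ g h k : G, T g h⁻¹ → T h k⁻¹ → T (h⁻¹ * g) (k⁻¹ * h) → T g k⁻¹
  P : ∀ g h : G, T g h → T h (g⁻¹ * h⁻¹)
  Q : ∀ g h : G, T g h → T g⁻¹ (h * g)
  hP3 : ∀ (g h : G) (a : T g h),
    P _ _ (P _ _ (P g h a)) =
      castT T (show g = h⁻¹ * (g⁻¹ * h⁻¹)⁻¹ by group)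
        (show h = (g⁻¹ * h⁻¹)⁻¹ * (h⁻¹ * (g⁻¹ * h⁻¹)⁻¹)⁻¹ by group) a
  hQ2 : ∀ (g h : G) (a : T g h),
    Q _ _ (Q g h a) =
      castT T (show g = g⁻¹⁻¹ by group) (show h = h * g * g⁻¹ by group) a
  hPQ : ∀ (g h : G) (a : T g h),
    P _ _ (P _ _ (Q g h a)) =
      castT T (show h⁻¹ = g⁻¹⁻¹ * (h * g)⁻¹ by group)
        (show g⁻¹ * h⁻¹ * h = (h * g)⁻¹ * (g⁻¹⁻¹ * (h * g)⁻¹)⁻¹ by group)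
        (Q _ _ (P g h a))
  hPm : ∀ (g h k : G) (a : T g h⁻¹) (b : T h k⁻¹) (c : T (h⁻¹ * g) (k⁻¹ * h)),
    P _ _ (m g h k a b c) =
      castT T (rfl : k⁻¹ = k⁻¹) (show (k⁻¹ * g)⁻¹ = g⁻¹ * k⁻¹⁻¹ by group)
        (m k⁻¹ (k⁻¹ * h) (k⁻¹ * g)
          (castT T (rfl : k⁻¹ = k⁻¹) (show h⁻¹ * k⁻¹⁻¹ = (k⁻¹ * h)⁻¹ by group)
            (P _ _ b))
          (castT T (rfl : k⁻¹ * h = k⁻¹ * h)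
            (show (h⁻¹ * g)⁻¹ * (k⁻¹ * h)⁻¹ = (k⁻¹ * g)⁻¹ by group) (P _ _ c))
          (castT T (show h⁻¹ = (k⁻¹ * h)⁻¹ * k⁻¹ by group)
            (show g⁻¹ * h⁻¹⁻¹ = (k⁻¹ * g)⁻¹ * (k⁻¹ * h) by group) (P _ _ a)))
  hQm : ∀ (g h k : G) (a : T g h⁻¹) (b : T h k⁻¹) (c : T (h⁻¹ * g) (k⁻¹ * h)),
    Q _ _ (m g h k a b c) =
      castT T (rfl : g⁻¹ = g⁻¹) (show (g⁻¹ * k)⁻¹ = k⁻¹ * g by group)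
        (m g⁻¹ (g⁻¹ * h) (g⁻¹ * k)
          (castT T (rfl : g⁻¹ = g⁻¹) (show h⁻¹ * g = (g⁻¹ * h)⁻¹ by group)
            (Q _ _ a))
          (castT T (show (h⁻¹ * g)⁻¹ = g⁻¹ * h by group)
            (show k⁻¹ * h * (h⁻¹ * g) = (g⁻¹ * k)⁻¹ by group) (Q _ _ c))
          (castT T (show h⁻¹ = (g⁻¹ * h)⁻¹ * g⁻¹ by group)
            (show k⁻¹ * h = (g⁻¹ * k)⁻¹ * (g⁻¹ * h) by group) (Q _ _ b)))
  hmm : ∀ (g h k l : G) (a : T g h⁻¹) (b : T h k⁻¹) (c : T (h⁻¹ * g) (k⁻¹ * h))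
      (d : T k l⁻¹) (e : T (k⁻¹ * g) (l⁻¹ * k)) (f : T (k⁻¹ * h) (l⁻¹ * k)),
    m g k l (m g h k a b c) d e =
      m g h l a (m h k l b d f)
        (castT T (rfl : h⁻¹ * g = h⁻¹ * g) (show (h⁻¹ * l)⁻¹ = l⁻¹ * h by group)
          (m (h⁻¹ * g) (h⁻¹ * k) (h⁻¹ * l)
            (castT T (rfl : h⁻¹ * g = h⁻¹ * g)
              (show k⁻¹ * h = (h⁻¹ * k)⁻¹ by group) c)
            (castT T (show (k⁻¹ * h)⁻¹ = h⁻¹ * k by group)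
              (show l⁻¹ * k * (k⁻¹ * h) = (h⁻¹ * l)⁻¹ by group) (Q _ _ f))
            (castT T (show k⁻¹ * g = (h⁻¹ * k)⁻¹ * (h⁻¹ * g) by group)
              (show l⁻¹ * k = (h⁻¹ * l)⁻¹ * (h⁻¹ * k) by group) e)))
  him : ∀ (g h k : G) (f : T g h⁻¹) (a : T h k⁻¹) (b : T (h⁻¹ * g) (k⁻¹ * h)),
    m g k h (m g h k f a b)
      (castT T (show h⁻¹⁻¹ * (k⁻¹ * h)⁻¹ = k by group)
        (show (k⁻¹ * h)⁻¹ * (h⁻¹⁻¹ * (k⁻¹ * h)⁻¹)⁻¹ = h⁻¹ by group)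
        (P _ _ (P _ _ (Q h k⁻¹ a))))
      (castT T (show k⁻¹ * h * (h⁻¹ * g) = k⁻¹ * g by group)
        (show (h⁻¹ * g)⁻¹⁻¹ * (k⁻¹ * h * (h⁻¹ * g))⁻¹ = h⁻¹ * k by group)
        (P _ _ (Q _ _ b)))
      = f

variable {G : Type} [Group G] [Fintype G] [DecidableEq G]
variable (K : Type) [Field K]
variable (D : DeltaGroup G) [∀ g h : G, Fintype (D.T g h)] [∀ g h : G, DecidableEq (D.T g h)]

/-- The basis of the 3-algebra associated to a finite Δ-group: the disjoint union of the
sets `T(g,h)`. -/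
def BasisT : Type := Σ g : G, Σ h : G, D.T g h

/-- The vector space `A = ⊕_{g,h∈G} ⊕_{x∈T(g,h)} k·x`. -/
def AlgT : Type := BasisT D →₀ K

noncomputable instance : AddCommGroup (AlgT K D) := Finsupp.instAddCommGroup
noncomputable instance : Module K (AlgT K D) := Finsupp.module _ _

/-- The linear extension of `P` to `A`. -/
noncomputable def PA : AlgT K D →ₗ[K] AlgT K D :=
  Finsupp.lmapDomain K K (fun x : BasisT D => ⟨x.2.1, x.1⁻¹ * x.2.1⁻¹, D.P x.1 x.2.1 x.2.2⟩)

/-- The extension of `m` to basis elements of `A`: it is `m` on admissible triples of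
basis elements and `0` otherwise. -/
noncomputable def mb (x y z : BasisT D) : AlgT K D :=
  if hc : x.2.1 = y.1⁻¹ ∧ z.1 = y.1⁻¹ * x.1 ∧ z.2.1 = y.2.1 * y.1 then
    Finsupp.single
      ⟨x.1, y.2.1,
        castT D.T rfl (show (y.2.1⁻¹)⁻¹ = y.2.1 by group)
          (D.m x.1 y.1 y.2.1⁻¹
            (castT D.T rfl hc.1 x.2.2)
            (castT D.T rfl (show y.2.1 = (y.2.1⁻¹)⁻¹ by group) y.2.2)
            (castT D.T hc.2.1
              (hc.2.2.trans (show y.2.1 * y.1 = (y.2.1⁻¹)⁻¹ * y.1 by group)) z.2.2))⟩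
      (1 : K)
  else 0

/-- The trilinear extension of `m` to `A`. -/
noncomputable def mA (a b c : AlgT K D) : AlgT K D :=
  a.sum fun i ai => b.sum fun j bj => c.sum fun l cl => (ai * bj * cl) • mb K D i j l

/-- `u(1) = Σ_{g,h∈G} (1/#T(g,h)) Σ_{x∈T(g,h)} x ⊗ Q(x)`. -/
noncomputable def uA : AlgT K D ⊗[K] AlgT K D :=
  ∑ g : G, ∑ h : G, (Fintype.card (D.T g h) : K)⁻¹ •
    ∑ x : D.T g h,
      (Finsupp.single (⟨g, h, x⟩ : BasisT D) (1 : K)) ⊗ₜ[K]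
        (Finsupp.single (⟨g⁻¹, h * g, D.Q g h x⟩ : BasisT D) (1 : K))

/-!
`P` permutes the basis with `P³ = id`, so its linear extension cubes to the identity, and
`P(m(x,y,z)) = m(P y, P z, P x)` on basis triples (the admissibility conditions being
permuted accordingly) extends trilinearly. For the symmetry of `u`, the axiom `P²Q = QP`
turns the flipped summand of `x ⊗ Q x` into `QPx ⊗ Px = y ⊗ Q y` with `y = QPx`; since
`x ↦ QPx` is a bijection of the basis preserving `#T(g,h)`, the sum is unchanged.
-/

section Transport

variable {G : Type} {T : G → G → Type}

theorem castT_heq {a b c d : G} (h1 : a = b) (h2 : c = d) (x : T a c) :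
    HEq (castT T h1 h2 x) x := by
  subst h1 h2; rfl

theorem castT_injective {a b c d : G} (h1 : a = b) (h2 : c = d) :
    Function.Injective (castT T h1 h2) := by
  subst h1 h2; exact fun _ _ => id

theorem sigma_mk_castT {a b c d : G} (h1 : a = b) (h2 : c = d) (x : T a c) :
    (⟨b, d, castT T h1 h2 x⟩ : Σ g h : G, T g h) = ⟨a, c, x⟩ := by
  subst h1 h2; rfl

theorem sigma_mk_eq_of_heq {g g' h h' : G} {v : T g h} {v' : T g' h'}
    (hg : g = g') (hh : h = h') (hv : HEq v v') :
    (⟨g, h, v⟩ : Σ a b : G, T a b) = ⟨g', h', v'⟩ := by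
  subst hg hh; cases hv; rfl

end Transport

namespace DeltaGroup

variable {G : Type} [Group G] (D : DeltaGroup G)

theorem P_heq_P {g g' h h' : G} (hg : g = g') (hh : h = h')
    {a : D.T g h} {a' : D.T g' h'} (ha : HEq a a') :
    HEq (D.P g h a) (D.P g' h' a') := by
  subst hg hh; cases ha; rfl

theorem m_heq_m {g g' h h' k k' : G} (hg : g = g') (hh : h = h') (hk : k = k')
    {a : D.T g h⁻¹} {a' : D.T g' h'⁻¹} {b : D.T h k⁻¹} {b' : D.T h' k'⁻¹}
    {c : D.T (h⁻¹ * g) (k⁻¹ * h)} {c' : D.T (h'⁻¹ * g') (k'⁻¹ * h')}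
    (ha : HEq a a') (hb : HEq b b') (hc : HEq c c') :
    HEq (D.m g h k a b c) (D.m g' h' k' a' b' c') := by
  subst hg hh hk; cases ha; cases hb; cases hc; rfl

theorem P_injective (g h : G) : Function.Injective (D.P g h) := fun a b hab => by
  have := congrArg (D.P _ _) (congrArg (D.P _ _) hab)
  rw [D.hP3, D.hP3] at this
  exact castT_injective _ _ this

theorem Q_injective (g h : G) : Function.Injective (D.Q g h) := fun a b hab => by
  have := congrArg (D.Q _ _) hab
  rw [D.hQ2, D.hQ2] at this
  exact castT_injective _ _ this

def basisP (x : BasisT D) : BasisT D := ⟨x.2.1, x.1⁻¹ * x.2.1⁻¹, D.P x.1 x.2.1 x.2.2⟩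

def basisQ (x : BasisT D) : BasisT D := ⟨x.1⁻¹, x.2.1 * x.1, D.Q x.1 x.2.1 x.2.2⟩

theorem basisP_basisP_basisP (x : BasisT D) : D.basisP (D.basisP (D.basisP x)) = x := by
  obtain ⟨g, h, v⟩ := x
  show (⟨_, _, D.P _ _ (D.P _ _ (D.P g h v))⟩ : BasisT D) = _
  rw [D.hP3, sigma_mk_castT]

theorem basisQ_involutive : Function.Involutive D.basisQ := by
  rintro ⟨g, h, v⟩
  show (⟨_, _, D.Q _ _ (D.Q g h v)⟩ : BasisT D) = _
  rw [D.hQ2, sigma_mk_castT]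

theorem basisP_basisP_basisQ (x : BasisT D) :
    D.basisP (D.basisP (D.basisQ x)) = D.basisQ (D.basisP x) := by
  obtain ⟨g, h, v⟩ := x
  show (⟨_, _, D.P _ _ (D.P _ _ (D.Q g h v))⟩ : BasisT D) = _
  rw [D.hPQ, sigma_mk_castT]
  rfl

def basisPEquiv : BasisT D ≃ BasisT D where
  toFun := D.basisP
  invFun x := D.basisP (D.basisP x)
  left_inv := D.basisP_basisP_basisP
  right_inv := D.basisP_basisP_basisP

abbrev Admissible (x y z : BasisT D) : Prop :=
  x.2.1 = y.1⁻¹ ∧ z.1 = y.1⁻¹ * x.1 ∧ z.2.1 = y.2.1 * y.1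

theorem admissible_basisP_iff (x y z : BasisT D) :
    D.Admissible (D.basisP y) (D.basisP z) (D.basisP x) ↔ D.Admissible x y z := by
  obtain ⟨xg, xh, -⟩ := x
  obtain ⟨yg, yh, -⟩ := y
  obtain ⟨zg, zh, -⟩ := z
  show (yg⁻¹ * yh⁻¹ = zh⁻¹ ∧ xh = zh⁻¹ * yh ∧ xg⁻¹ * xh⁻¹ = zg⁻¹ * zh⁻¹ * zh) ↔
    (xh = yg⁻¹ ∧ zg = yg⁻¹ * xg ∧ zh = yh * yg)
  constructor
  · rintro ⟨h1, h2, h3⟩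
    have hz : zh = yh * yg := by rw [← inv_inv zh, ← h1]; group
    have hx : xh = yg⁻¹ := by rw [h2, hz]; group
    refine ⟨hx, ?_, hz⟩
    rw [← inv_inv zg, show zg⁻¹ = xg⁻¹ * xh⁻¹ by rw [h3]; group, hx]
    group
  · rintro ⟨rfl, rfl, rfl⟩
    refine ⟨?_, ?_, ?_⟩ <;> group

section Card

variable [∀ g h : G, Fintype (D.T g h)]

def fiberCard (x : BasisT D) : ℕ := Fintype.card (D.T x.1 x.2.1)

theorem fiberCard_basisP (x : BasisT D) : D.fiberCard (D.basisP x) = D.fiberCard x := by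
  have hle : ∀ y, D.fiberCard y ≤ D.fiberCard (D.basisP y) := fun y =>
    Fintype.card_le_of_injective _ (D.P_injective y.1 y.2.1)
  have h3 := D.basisP_basisP_basisP x
  refine le_antisymm ?_ (hle x)
  calc D.fiberCard (D.basisP x) ≤ D.fiberCard (D.basisP (D.basisP x)) := hle _
    _ ≤ D.fiberCard (D.basisP (D.basisP (D.basisP x))) := hle _
    _ = D.fiberCard x := by rw [h3]

theorem fiberCard_basisQ (x : BasisT D) : D.fiberCard (D.basisQ x) = D.fiberCard x := by
  have hle : ∀ y, D.fiberCard y ≤ D.fiberCard (D.basisQ y) := fun y =>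
    Fintype.card_le_of_injective _ (D.Q_injective y.1 y.2.1)
  refine le_antisymm ?_ (hle x)
  calc D.fiberCard (D.basisQ x) ≤ D.fiberCard (D.basisQ (D.basisQ x)) := hle _
    _ = D.fiberCard x := by rw [D.basisQ_involutive x]

end Card

end DeltaGroup

section Operations

variable {G : Type} [Group G] (K : Type) [Field K] (D : DeltaGroup G)

theorem PA_eq_lmapDomain : PA K D = Finsupp.lmapDomain K K D.basisP := rfl

theorem PA_single (x : BasisT D) (c : K) :
    PA K D (Finsupp.single x c) = Finsupp.single (D.basisP x) c :=
  Finsupp.mapDomain_single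

noncomputable def basisVec (x : BasisT D) : AlgT K D := Finsupp.single x 1

theorem PA_basisVec (x : BasisT D) : PA K D (basisVec K D x) = basisVec K D (D.basisP x) :=
  PA_single K D x 1

theorem PA_comp_PA_comp_PA : PA K D ∘ₗ PA K D ∘ₗ PA K D = LinearMap.id := by
  rw [PA_eq_lmapDomain]
  erw [← Finsupp.lmapDomain_comp, ← Finsupp.lmapDomain_comp,
    show D.basisP ∘ D.basisP ∘ D.basisP = id from funext D.basisP_basisP_basisP,
    Finsupp.lmapDomain_id]
  rfl

variable [DecidableEq G]

theorem mb_of_not_admissible {x y z : BasisT D} (h : ¬D.Admissible x y z) :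
    mb K D x y z = 0 :=
  dif_neg h

theorem PA_mb (x y z : BasisT D) :
    PA K D (mb K D x y z) = mb K D (D.basisP y) (D.basisP z) (D.basisP x) := by
  by_cases hc : D.Admissible x y z
  · obtain ⟨xg, xh, xv⟩ := x
    obtain ⟨yg, yh, yv⟩ := y
    obtain ⟨zg, zh, zv⟩ := z
    obtain ⟨h1, h2, h3⟩ := hc
    dsimp only at h1 h2 h3
    subst h1 h2 h3
    have hc' : yg⁻¹ * yh⁻¹ = (yh * yg)⁻¹ ∧ yg⁻¹ = (yh * yg)⁻¹ * yh ∧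
        xg⁻¹ * yg⁻¹⁻¹ = (yg⁻¹ * xg)⁻¹ * (yh * yg)⁻¹ * (yh * yg) := by
      refine ⟨?_, ?_, ?_⟩ <;> group
    simp only [mb, DeltaGroup.basisP]
    erw [dif_pos (⟨rfl, rfl, rfl⟩ : yg⁻¹ = yg⁻¹ ∧ yg⁻¹ * xg = yg⁻¹ * xg ∧ yh * yg = yh * yg),
      dif_pos hc', PA_single]
    dsimp only [DeltaGroup.basisP]
    refine congrArg (Finsupp.single · 1) (sigma_mk_eq_of_heq rfl (by group) ?_)
    refine (D.P_heq_P rfl ?_ (castT_heq _ _ _)).trans ?_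
    · group
    refine (heq_of_eq (D.hPm _ _ _ _ _ _)).trans ((castT_heq _ _ _).trans ?_)
    refine HEq.trans ?_ (castT_heq _ _ _).symm
    refine D.m_heq_m (by group) (by group) (by group) ?_ ?_ ?_ <;>
      refine (castT_heq _ _ _).trans
        ((D.P_heq_P ?_ ?_ (castT_heq _ _ _)).trans (castT_heq _ _ _).symm) <;> group
  · rw [mb_of_not_admissible K D hc,
      mb_of_not_admissible K D (mt (D.admissible_basisP_iff x y z).mp hc), map_zero]

-- Stated on `BasisT D →₀ K` rather than on `AlgT K D` so that the `Finsupp` lemmas rewrite.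
theorem PA_mA (a b c : BasisT D →₀ K) :
    PA K D (mA K D a b c) = mA K D (PA K D b) (PA K D c) (PA K D a) := by
  have hP : Function.Injective D.basisP := D.basisPEquiv.injective
  simp only [mA, map_finsuppSum, map_smul, PA_mb]
  erw [Finsupp.sum_mapDomain_index_inj hP, Finsupp.sum_comm a]
  refine Finsupp.sum_congr fun j _ => ?_
  erw [Finsupp.sum_mapDomain_index_inj hP, Finsupp.sum_comm a]
  refine Finsupp.sum_congr fun l _ => ?_
  erw [Finsupp.sum_mapDomain_index_inj hP]
  exact Finsupp.sum_congr fun i _ => by rw [mul_rotate]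

end Operations

section Unit

variable {G : Type} [Group G] (K : Type) [Field K] (D : DeltaGroup G)
  [∀ g h : G, Fintype (D.T g h)]

noncomputable def uTerm (x : BasisT D) : AlgT K D ⊗[K] AlgT K D :=
  (D.fiberCard x : K)⁻¹ • (basisVec K D x ⊗ₜ[K] basisVec K D (D.basisQ x))

theorem map_comm_uTerm (x : BasisT D) :
    TensorProduct.map (PA K D ∘ₗ PA K D) (PA K D)
        (TensorProduct.comm K (AlgT K D) (AlgT K D) (uTerm K D x)) =
      uTerm K D (D.basisQ (D.basisP x)) := by
  simp only [uTerm, map_smul, TensorProduct.comm_tmul, TensorProduct.map_tmul,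
    LinearMap.comp_apply, PA_basisVec, D.basisP_basisP_basisQ, D.basisQ_involutive (D.basisP x),
    D.fiberCard_basisQ, D.fiberCard_basisP]

variable [Fintype G]

noncomputable instance : Fintype (BasisT D) :=
  inferInstanceAs (Fintype (Σ g h : G, D.T g h))

theorem uA_eq_sum_uTerm : uA K D = ∑ x : BasisT D, uTerm K D x := by
  refine Eq.trans ?_ (Fintype.sum_sigma fun x : Σ g h : G, D.T g h => uTerm K D x).symm
  simp only [uA, Fintype.sum_sigma, Finset.smul_sum]
  rfl

theorem uA_eq_map_comm :
    uA K D = TensorProduct.map (PA K D ∘ₗ PA K D) (PA K D)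
      (TensorProduct.comm K (AlgT K D) (AlgT K D) (uA K D)) := by
  simp only [uA_eq_sum_uTerm, map_sum, map_comm_uTerm]
  exact ((D.basisPEquiv.trans (D.basisQ_involutive.toPerm _)).sum_comp (uTerm K D)).symm

end Unit

theorem delta_group_strong_three_algebra :
    uA K D =
      TensorProduct.map (PA K D ∘ₗ PA K D) (PA K D)
        ((TensorProduct.comm K (AlgT K D) (AlgT K D)) (uA K D)) ∧
    (PA K D ∘ₗ PA K D ∘ₗ PA K D = LinearMap.id) ∧
    (∀ a b c : AlgT K D, PA K D (mA K D a b c) = mA K D (PA K D b) (PA K D c) (PA K D a)) :=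
  ⟨uA_eq_map_comm K D, PA_comp_PA_comp_PA K D, PA_mA K D⟩
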